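/- For any 0/1-labeling of a rooted binary tree T with n nodes, the quantity (b11 − b10)/2 + b01 equals the number of leaves labeled 1 minus the indicator that the root is labeled 1, and hence is at most (n+1)/2. -/

import Mathlib

/-- A rooted tree on `Fin n` with root `0`, given by a parent function.
Every non-root node's parent has a smaller index, which makes the graph acyclic
and connected to the root. -/
structure PhyloTree (n : ℕ) where
  parent : Fin n → Fin n
  root_fixed : ∀ v : Fin n, v.val = 0 → parent v = v
  parent_lt : ∀ v : Fin n, v.val ≠ 0 → (parent v).val < v.val

namespace PhyloTree

variable {n : ℕ}

/-- Transition count `b ℓ i j`: the number of edges from a parent labeled `i`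
to a child labeled `j`, for the `0/1`-labeling `ℓ`. -/
def b (T : PhyloTree n) (ℓ : Fin n → Fin 2) (i j : Fin 2) : ℕ :=
  (Finset.univ.filter (fun v : Fin n =>
    v.val ≠ 0 ∧ ℓ (T.parent v) = i ∧ ℓ v = j)).card

/-- The set of children of a node. -/
def children (T : PhyloTree n) (v : Fin n) : Finset (Fin n) :=
  Finset.univ.filter (fun w => w.val ≠ 0 ∧ T.parent w = v)

/-- A leaf is a node with no children. -/
def IsLeaf (T : PhyloTree n) (v : Fin n) : Prop := T.children v = ∅

instance (T : PhyloTree n) (v : Fin n) : Decidable (T.IsLeaf v) :=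
  inferInstanceAs (Decidable (T.children v = ∅))

/-- A rooted tree is binary if every non-leaf node has exactly two children. -/
def IsBinary (T : PhyloTree n) : Prop :=
  ∀ v : Fin n, T.IsLeaf v ∨ (T.children v).card = 2

/-- The finset of leaves. -/
def leaves (T : PhyloTree n) : Finset (Fin n) :=
  Finset.univ.filter (fun v => T.IsLeaf v)

end PhyloTree

/-! Double-count the edges incident to `1`-labelled nodes. Every internal node has two children,
so the edges leaving `1`-nodes number `b₁₀ + b₁₁ = 2 · #(internal 1-nodes)`; every node but the
root has one parent, so the edges entering `1`-nodes number
`b₀₁ + b₁₁ = #(1-nodes) - [root labelled 1]`. Twice the second minus the first leaves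
`2 · #(1-leaves) - 2 · [root labelled 1]`. The same count over all nodes gives `n - 1 = 2 · #internal`,
i.e. `2 · #leaves = n + 1`, which bounds the result. -/

open Finset

lemma card_filter_eq_zero_add_card_filter_eq_one {α : Type*} (s : Finset α) (g : α → Fin 2) :
    #{x ∈ s | g x = 0} + #{x ∈ s | g x = 1} = #s := by
  have h : ∀ a : Fin 2, a = 0 ↔ ¬ a = 1 := by decide
  simp only [h]
  rw [add_comm, card_filter_add_card_filter_not]

lemma Fin.card_filter_val_ne_zero_add_ite {n : ℕ} (hn : 0 < n) (p : Fin n → Prop)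
    [DecidablePred p] :
    #{v | v.val ≠ 0 ∧ p v} + (if p ⟨0, hn⟩ then 1 else 0) = #{v | p v} := by
  have h : ({v | v.val ≠ 0 ∧ p v} : Finset (Fin n)) = ({v | p v} : Finset _).erase ⟨0, hn⟩ := by
    ext v
    simp [Fin.ext_iff, and_comm]
  rw [h]
  split_ifs with hp
  · exact card_erase_add_one (by simpa using hp)
  · rw [erase_eq_of_notMem (by simpa using hp), add_zero]

namespace PhyloTree

variable {n : ℕ} (T : PhyloTree n)

lemma card_nonroot_parent_mem (s : Finset (Fin n)) :
    #{v | v.val ≠ 0 ∧ T.parent v ∈ s} = ∑ u ∈ s, #(T.children u) := by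
  rw [card_eq_sum_card_fiberwise (f := T.parent) (t := s) (fun v hv => by simp_all)]
  refine sum_congr rfl fun u hu => congrArg card ?_
  ext w
  simp only [children, mem_filter, mem_univ, true_and]
  constructor
  · rintro ⟨⟨hw, _⟩, rfl⟩
    exact ⟨hw, rfl⟩
  · rintro ⟨hw, rfl⟩
    exact ⟨⟨hw, hu⟩, rfl⟩

variable {T}

lemma IsBinary.sum_card_children (hT : T.IsBinary) (s : Finset (Fin n)) :
    ∑ u ∈ s, #(T.children u) = 2 * #{u ∈ s | ¬ T.IsLeaf u} := by
  have h : ∀ u ∈ s, #(T.children u) = if ¬ T.IsLeaf u then 2 else 0 := fun u _ => by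
    rcases hT u with hu | hu
    · rw [if_neg (not_not.2 hu), show T.children u = ∅ from hu, card_empty]
    · rw [if_pos fun h => by simp [show T.children u = ∅ from h] at hu, hu]
  rw [sum_congr rfl h, ← sum_filter, sum_const, smul_eq_mul, mul_comm]

lemma IsBinary.card_nonroot_parent_mem (hT : T.IsBinary) (s : Finset (Fin n)) :
    #{v | v.val ≠ 0 ∧ T.parent v ∈ s} = 2 * #{u ∈ s | ¬ T.IsLeaf u} := by
  rw [T.card_nonroot_parent_mem, hT.sum_card_children]

lemma IsBinary.two_mul_card_leaves (hT : T.IsBinary) (hn : 0 < n) :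
    2 * #T.leaves = n + 1 := by
  have hedges := hT.card_nonroot_parent_mem univ
  have hroot := Fin.card_filter_val_ne_zero_add_ite hn (fun _ => True)
  have hsplit := card_filter_add_card_filter_not (s := univ) (fun v => T.IsLeaf v)
  simp only [mem_univ, and_true, if_true] at hedges hroot
  simp only [filter_true, card_univ, Fintype.card_fin] at hroot hsplit
  rw [leaves]
  omega

variable (T) (ℓ : Fin n → Fin 2)

lemma b_zero_add_b_one_right (i : Fin 2) :
    T.b ℓ i 0 + T.b ℓ i 1 = #{v | v.val ≠ 0 ∧ ℓ (T.parent v) = i} := by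
  rw [← card_filter_eq_zero_add_card_filter_eq_one _ ℓ, filter_filter, filter_filter]
  simp only [b, and_assoc]

lemma b_zero_add_b_one_left (j : Fin 2) :
    T.b ℓ 0 j + T.b ℓ 1 j = #{v | v.val ≠ 0 ∧ ℓ v = j} := by
  rw [← card_filter_eq_zero_add_card_filter_eq_one _ (fun v => ℓ (T.parent v)),
    filter_filter, filter_filter]
  simp only [b, and_assoc, @and_comm (ℓ _ = j)]

end PhyloTree

/-- b11 − b10 + 2·b01 = 2·(#leaves labeled 1) − 2·[root labeled 1],
and hence b11 − b10 + 2·b01 ≤ n + 1. -/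
theorem stmt15 {n : ℕ} (hn : 0 < n) (T : PhyloTree n) (hT : T.IsBinary)
    (ℓ : Fin n → Fin 2) :
    ((T.b ℓ 1 1 : ℤ) - T.b ℓ 1 0 + 2 * T.b ℓ 0 1
        = 2 * ((T.leaves.filter (fun v => ℓ v = 1)).card : ℤ)
          - 2 * (if ℓ ⟨0, hn⟩ = 1 then 1 else 0))
      ∧ (T.b ℓ 1 1 : ℤ) - T.b ℓ 1 0 + 2 * T.b ℓ 0 1 ≤ n + 1 := by
  have hout : T.b ℓ 1 0 + T.b ℓ 1 1 = 2 * #{u | ℓ u = 1 ∧ ¬ T.IsLeaf u} := by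
    have h := hT.card_nonroot_parent_mem {u | ℓ u = 1}
    simp only [mem_filter, mem_univ, true_and, filter_filter] at h
    rw [T.b_zero_add_b_one_right, h]
  have hin : T.b ℓ 0 1 + T.b ℓ 1 1 + (if ℓ ⟨0, hn⟩ = 1 then 1 else 0) = #{u | ℓ u = 1} := by
    rw [T.b_zero_add_b_one_left, Fin.card_filter_val_ne_zero_add_ite]
  have hsplit : #(T.leaves.filter (fun v => ℓ v = 1)) + #{u | ℓ u = 1 ∧ ¬ T.IsLeaf u}
      = #{u | ℓ u = 1} := by
    rw [PhyloTree.leaves, filter_comm, ← filter_filter, card_filter_add_card_filter_not]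
  have hleaves := hT.two_mul_card_leaves hn
  have hle := card_filter_le T.leaves (fun v => ℓ v = 1)
  constructor <;> split_ifs at * <;> push_cast <;> omega
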